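/- (The reversed generator is the adjoint.) Assume S is a finite set, ξ, η : S → ℤ, r : S×S×S×S → [0,∞) satisfies condition (A), π is a probability measure on S satisfying condition (C), and condition (D) holds. Fix N ≥ 2 and (θ,τ) ∈ ℝ², and let π^N_{θ,τ} := ⊗_{j∈𝕋_N} π_{θ,τ} on Ω^N = S^{𝕋_N}. Define the reversed generator L*^N g(ω̄) := Σ_{j∈𝕋_N} Σ_{ω',ω''∈S} r(ω_j,ω_{j−1};ω'',ω') ( g(Θ_{j−1}^{ω',ω''}ω̄) − g(ω̄) ). Then for all functions f, g : Ω^N → ℝ, Σ_{ω̄∈Ω^N} π^N_{θ,τ}(ω̄) g(ω̄) (L^N f)(ω̄) = Σ_{ω̄∈Ω^N} π^N_{θ,τ}(ω̄) f(ω̄) (L*^N g)(ω̄); i.e., L*^N is the adjoint of L^N with respect to every canonical measure π^N_{θ,τ}. -/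
import Mathlib


open scoped BigOperators

/-- The single-site Gibbs measure `π_{θ,τ}(ω) = π(ω) exp(θξ(ω)+τη(ω)−G(θ,τ))`. -/
noncomputable def gibbsMeasure {S : Type*} [Fintype S]
    (π : S → ℝ) (ξ η : S → ℤ) (θ τ : ℝ) (ω : S) : ℝ :=
  π ω * Real.exp (θ * (ξ ω : ℝ) + τ * (η ω : ℝ) -
    Real.log (∑ ω' : S, Real.exp (θ * (ξ ω' : ℝ) + τ * (η ω' : ℝ)) * π ω'))

/-- The infinitesimal generator `L^N` of the interacting particle system on the
discrete torus `𝕋_N = ℤ/Nℤ`: nearest-neighbour pairs `(ω_j, ω_{j+1})` jump to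
`(ω', ω'')` with rate `r(ω_j, ω_{j+1}; ω', ω'')`. -/
def generator {S : Type*} [Fintype S] {N : ℕ} [NeZero N]
    (r : S → S → S → S → ℝ) (f : (ZMod N → S) → ℝ) (cfg : ZMod N → S) : ℝ :=
  ∑ j : ZMod N, ∑ ω' : S, ∑ ω'' : S,
    r (cfg j) (cfg (j + 1)) ω' ω'' *
      (f (Function.update (Function.update cfg j ω') (j + 1) ω'') - f cfg)


/-- The reversed generator `L*^N`: `L*^N g (cfg) = Σ_j Σ_{ω',ω''}
r(cfg_j, cfg_{j−1}; ω'', ω') (g(Θ_{j−1}^{ω',ω''} cfg) − g(cfg))`. -/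
def reversedGenerator {S : Type*} [Fintype S] {N : ℕ} [NeZero N]
    (r : S → S → S → S → ℝ) (g : (ZMod N → S) → ℝ) (cfg : ZMod N → S) : ℝ :=
  ∑ j : ZMod N, ∑ ω' : S, ∑ ω'' : S,
    r (cfg j) (cfg (j - 1)) ω'' ω' *
      (g (Function.update (Function.update cfg (j - 1) ω') j ω'') - g cfg)

open Finset

section aux
variable {S : Type*} [Fintype S]

lemma gibbs_db (ξ η : S → ℤ) (r : S → S → S → S → ℝ) (π : S → ℝ)
    (hr : ∀ ω₁ ω₂ ω₁' ω₂' : S, 0 ≤ r ω₁ ω₂ ω₁' ω₂')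
    (hA : ∀ ω₁ ω₂ ω₁' ω₂' : S, 0 < r ω₁ ω₂ ω₁' ω₂' →
      ξ ω₁ + ξ ω₂ = ξ ω₁' + ξ ω₂' ∧ η ω₁ + η ω₂ = η ω₁' + η ω₂')
    (hC : ∀ ω₁ ω₂ ω₁' ω₂' : S,
      π ω₁ * π ω₂ * r ω₁ ω₂ ω₁' ω₂' = π ω₂' * π ω₁' * r ω₂' ω₁' ω₂ ω₁)
    (θ τ : ℝ) (a b c d : S) :
    gibbsMeasure π ξ η θ τ a * gibbsMeasure π ξ η θ τ b * r a b c d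
      = gibbsMeasure π ξ η θ τ d * gibbsMeasure π ξ η θ τ c * r d c b a := by
  unfold gibbsMeasure
  set G := Real.log (∑ ω' : S, Real.exp (θ * (ξ ω' : ℝ) + τ * (η ω' : ℝ)) * π ω') with hG
  rcases (hr a b c d).eq_or_lt with hzero | hpos
  · have h2 : π d * π c * r d c b a = 0 := by rw [← hC a b c d, ← hzero, mul_zero]
    rw [← hzero, mul_zero]
    linear_combination (-(Real.exp (θ * (ξ d : ℝ) + τ * (η d : ℝ) - G) *
      Real.exp (θ * (ξ c : ℝ) + τ * (η c : ℝ) - G))) * h2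
  · obtain ⟨h1, h2⟩ := hA a b c d hpos
    have h1' : (ξ a : ℝ) + (ξ b : ℝ) = (ξ c : ℝ) + (ξ d : ℝ) := by exact_mod_cast h1
    have h2' : (η a : ℝ) + (η b : ℝ) = (η c : ℝ) + (η d : ℝ) := by exact_mod_cast h2
    have hexp : Real.exp (θ * (ξ a : ℝ) + τ * (η a : ℝ) - G) *
        Real.exp (θ * (ξ b : ℝ) + τ * (η b : ℝ) - G)
        = Real.exp (θ * (ξ d : ℝ) + τ * (η d : ℝ) - G) *
          Real.exp (θ * (ξ c : ℝ) + τ * (η c : ℝ) - G) := by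
      rw [← Real.exp_add, ← Real.exp_add]
      congr 1
      linear_combination θ * h1' + τ * h2'
    have hC' := hC a b c d
    linear_combination (Real.exp (θ * (ξ a : ℝ) + τ * (η a : ℝ) - G) *
        Real.exp (θ * (ξ b : ℝ) + τ * (η b : ℝ) - G)) * hC'
      + (π d * π c * r d c b a) * hexp

lemma cycle_sum {N : ℕ} [NeZero N] (R : S → S → ℝ)
    (hD : ∀ a b c : S, R a b + R b c + R c a = R a c + R c b + R b a)
    (c₀ : S) (x : ZMod N → S) :
    ∑ j : ZMod N, R (x j) (x (j + 1)) = ∑ j : ZMod N, R (x (j + 1)) (x j) := by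
  have key : ∀ a b : S, R a b - R b a
      = (R a c₀ - R c₀ a) - (R b c₀ - R c₀ b) := by
    intro a b
    have h1 := hD a b c₀
    have h2 := hD b a c₀
    linarith
  have shift : ∑ j : ZMod N, (R (x (j + 1)) c₀ - R c₀ (x (j + 1)))
      = ∑ j : ZMod N, (R (x j) c₀ - R c₀ (x j)) := by
    exact Fintype.sum_equiv (Equiv.addRight (1 : ZMod N))
      (fun j => R (x (j + 1)) c₀ - R c₀ (x (j + 1)))
      (fun j => R (x j) c₀ - R c₀ (x j)) (fun j => rfl)
  have h0 : ∑ j : ZMod N, (R (x j) (x (j + 1)) - R (x (j + 1)) (x j)) = 0 := by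
    have := Finset.sum_congr rfl (fun j (_ : j ∈ (univ : Finset (ZMod N))) =>
      key (x j) (x (j + 1)))
    rw [this, Finset.sum_sub_distrib, shift, sub_self]
  rw [Finset.sum_sub_distrib] at h0
  linarith

lemma prod_update_pair {N : ℕ} [NeZero N]
    (p : S → ℝ) (j : ZMod N) (hj : j + 1 ≠ j) (cfg : ZMod N → S) (c d : S) :
    (∏ k : ZMod N, p (Function.update (Function.update cfg j c) (j + 1) d k))
      = p c * p d * ∏ k ∈ (univ.erase (j + 1)).erase j, p (cfg k) := by
  rw [← Finset.mul_prod_erase univ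
    (fun k => p (Function.update (Function.update cfg j c) (j + 1) d k)) (mem_univ (j+1))]
  rw [← Finset.mul_prod_erase (univ.erase (j+1))
    (fun k => p (Function.update (Function.update cfg j c) (j + 1) d k))
    (mem_erase.2 ⟨fun h => hj h.symm, mem_univ j⟩)]
  have e1 : Function.update (Function.update cfg j c) (j + 1) d (j + 1) = d :=
    Function.update_self _ _ _
  have e2 : Function.update (Function.update cfg j c) (j + 1) d j = c := by
    rw [Function.update_of_ne (fun h => hj h.symm), Function.update_self]
  rw [e1, e2]
  have e3 : ∀ k ∈ (univ.erase (j + 1)).erase j,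
      p (Function.update (Function.update cfg j c) (j + 1) d k) = p (cfg k) := by
    intro k hk
    rw [mem_erase, mem_erase] at hk
    rw [Function.update_of_ne hk.2.1, Function.update_of_ne hk.1]
  rw [Finset.prod_congr rfl e3]
  ring

end aux

lemma key_step {S : Type*} [Fintype S] {N : ℕ} [NeZero N]
    (p : S → ℝ) (r : S → S → S → S → ℝ)
    (hdb : ∀ a b c d : S, p a * p b * r a b c d = p d * p c * r d c b a)
    (j : ZMod N) (hj : j + 1 ≠ j) (f g : (ZMod N → S) → ℝ) :
    (∑ cfg : ZMod N → S, ∑ c : S, ∑ d : S,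
        (∏ k : ZMod N, p (cfg k)) * g cfg *
          (r (cfg j) (cfg (j + 1)) c d *
            f (Function.update (Function.update cfg j c) (j + 1) d)))
    = ∑ cfg : ZMod N → S, ∑ a : S, ∑ b : S,
        (∏ k : ZMod N, p (cfg k)) * f cfg *
          (r (cfg (j + 1)) (cfg j) b a *
            g (Function.update (Function.update cfg j a) (j + 1) b)) := by
  have flat : ∀ T : (ZMod N → S) → S → S → ℝ,
      (∑ cfg : ZMod N → S, ∑ c : S, ∑ d : S, T cfg c d)
        = ∑ q : (ZMod N → S) × S × S, T q.1 q.2.1 q.2.2 := by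
    intro T
    rw [Fintype.sum_prod_type]
    exact Finset.sum_congr rfl (fun cfg _ => by rw [Fintype.sum_prod_type])
  refine ((flat _).trans ?_).trans (flat _).symm
  have hΘ1 : ∀ (cfg : ZMod N → S) (c d : S),
      Function.update (Function.update cfg j c) (j + 1) d j = c := by
    intro cfg c d
    rw [Function.update_of_ne (Ne.symm hj), Function.update_self]
  have hΘ2 : ∀ (cfg : ZMod N → S) (c d : S),
      Function.update (Function.update cfg j c) (j + 1) d (j + 1) = d := by
    intro cfg c d
    rw [Function.update_self]
  have hback : ∀ (cfg : ZMod N → S) (c d : S),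
      Function.update (Function.update
        (Function.update (Function.update cfg j c) (j + 1) d) j (cfg j))
        (j + 1) (cfg (j + 1)) = cfg := by
    intro cfg c d
    funext k
    rcases eq_or_ne k (j + 1) with h1 | h1
    · subst h1; rw [Function.update_self]
    · rcases eq_or_ne k j with h2 | h2
      · subst h2
        rw [Function.update_of_ne (Ne.symm hj), Function.update_self]
      · rw [Function.update_of_ne h1, Function.update_of_ne h2,
            Function.update_of_ne h1, Function.update_of_ne h2]
  set φ : ((ZMod N → S) × S × S) → ((ZMod N → S) × S × S) :=
    fun q => (Function.update (Function.update q.1 j q.2.1) (j + 1) q.2.2,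
      q.1 j, q.1 (j + 1)) with hφ
  have hinv : Function.Involutive φ := by
    rintro ⟨cfg, c, d⟩
    simp only [hφ, Prod.mk.injEq]
    exact ⟨hback cfg c d, hΘ1 cfg c d, hΘ2 cfg c d⟩
  have key : ∀ q : (ZMod N → S) × S × S,
      (∏ k : ZMod N, p (q.1 k)) * g q.1 * (r (q.1 j) (q.1 (j + 1)) q.2.1 q.2.2 *
          f (Function.update (Function.update q.1 j q.2.1) (j + 1) q.2.2))
      = (∏ k : ZMod N, p ((φ q).1 k)) * f (φ q).1 *
          (r ((φ q).1 (j + 1)) ((φ q).1 j) (φ q).2.2 (φ q).2.1 *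
            g (Function.update (Function.update (φ q).1 j (φ q).2.1)
                (j + 1) (φ q).2.2)) := by
    rintro ⟨cfg, c, d⟩
    simp only [hφ]
    rw [hΘ1, hΘ2, hback]
    have hm : (∏ k : ZMod N, p (cfg k)) * r (cfg j) (cfg (j + 1)) c d
        = (∏ k : ZMod N, p (Function.update (Function.update cfg j c) (j + 1) d k)) *
            r d c (cfg (j + 1)) (cfg j) := by
      rw [prod_update_pair p j hj cfg c d]
      have base := prod_update_pair p j hj cfg (cfg j) (cfg (j + 1))
      rw [Function.update_eq_self, Function.update_eq_self] at base
      rw [base]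
      linear_combination (∏ k ∈ (univ.erase (j + 1)).erase j, p (cfg k)) *
        hdb (cfg j) (cfg (j + 1)) c d
    linear_combination
      (g cfg * f (Function.update (Function.update cfg j c) (j + 1) d)) * hm
  exact Fintype.sum_bijective φ hinv.bijective _ _ key

/-- the reversed generator `L*^N` is the adjoint of `L^N` with
respect to every canonical product measure `π^N_{θ,τ}`. -/
theorem reversed_generator_is_adjoint {S : Type*} [Fintype S]
    (ξ η : S → ℤ) (r : S → S → S → S → ℝ) (π : S → ℝ)
    (hr : ∀ ω₁ ω₂ ω₁' ω₂' : S, 0 ≤ r ω₁ ω₂ ω₁' ω₂')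
    (hA : ∀ ω₁ ω₂ ω₁' ω₂' : S, 0 < r ω₁ ω₂ ω₁' ω₂' →
      ξ ω₁ + ξ ω₂ = ξ ω₁' + ξ ω₂' ∧ η ω₁ + η ω₂ = η ω₁' + η ω₂')
    (hπ0 : ∀ ω : S, 0 ≤ π ω) (hπ1 : ∑ ω : S, π ω = 1)
    (hC : ∀ ω₁ ω₂ ω₁' ω₂' : S,
      π ω₁ * π ω₂ * r ω₁ ω₂ ω₁' ω₂' = π ω₂' * π ω₁' * r ω₂' ω₁' ω₂ ω₁)
    (hD : ∀ ω₁ ω₂ ω₃ : S,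
      (∑ ω₁' : S, ∑ ω₂' : S, r ω₁ ω₂ ω₁' ω₂')
        + (∑ ω₁' : S, ∑ ω₂' : S, r ω₂ ω₃ ω₁' ω₂')
        + (∑ ω₁' : S, ∑ ω₂' : S, r ω₃ ω₁ ω₁' ω₂')
      = (∑ ω₁' : S, ∑ ω₂' : S, r ω₁ ω₃ ω₁' ω₂')
        + (∑ ω₁' : S, ∑ ω₂' : S, r ω₃ ω₂ ω₁' ω₂')
        + (∑ ω₁' : S, ∑ ω₂' : S, r ω₂ ω₁ ω₁' ω₂'))
    (N : ℕ) [NeZero N] (hN : 2 ≤ N) (θ τ : ℝ) :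
    ∀ f g : (ZMod N → S) → ℝ,
      ∑ cfg : ZMod N → S,
        (∏ j : ZMod N, gibbsMeasure π ξ η θ τ (cfg j)) * g cfg * generator r f cfg
      = ∑ cfg : ZMod N → S,
        (∏ j : ZMod N, gibbsMeasure π ξ η θ τ (cfg j)) * f cfg *
          reversedGenerator r g cfg := by
  intro f g
  rcases isEmpty_or_nonempty S with hS | hS
  · haveI : IsEmpty (ZMod N → S) := ⟨fun c => hS.false (c 0)⟩
    simp
  · haveI : Fact (1 < N) := ⟨hN⟩
    have hone : (1 : ZMod N) ≠ 0 := one_ne_zero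
    have hj : ∀ j : ZMod N, j + 1 ≠ j := by
      intro j h
      apply hone
      have h' : j + 1 - j = j - j := by rw [h]
      simpa using h'
    have hdb := gibbs_db ξ η r π hr hA hC θ τ
    obtain ⟨c₀⟩ := hS
    have pointL : ∀ cfg : ZMod N → S,
        (∏ k : ZMod N, gibbsMeasure π ξ η θ τ (cfg k)) * g cfg * generator r f cfg
        = (∑ j : ZMod N, ∑ c : S, ∑ d : S,
            (∏ k : ZMod N, gibbsMeasure π ξ η θ τ (cfg k)) * g cfg *
              (r (cfg j) (cfg (j + 1)) c d *
                f (Function.update (Function.update cfg j c) (j + 1) d)))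
          - (∏ k : ZMod N, gibbsMeasure π ξ η θ τ (cfg k)) * g cfg * f cfg *
              (∑ j : ZMod N, ∑ c : S, ∑ d : S, r (cfg j) (cfg (j + 1)) c d) := by
      intro cfg
      simp only [generator, mul_sub, Finset.mul_sum, Finset.sum_sub_distrib]
      congr 1
      refine Finset.sum_congr rfl fun j _ => Finset.sum_congr rfl fun c _ =>
        Finset.sum_congr rfl fun d _ => by ring
    have pointR : ∀ cfg : ZMod N → S,
        (∏ k : ZMod N, gibbsMeasure π ξ η θ τ (cfg k)) * f cfg *
            reversedGenerator r g cfg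
        = (∑ j : ZMod N, ∑ a : S, ∑ b : S,
            (∏ k : ZMod N, gibbsMeasure π ξ η θ τ (cfg k)) * f cfg *
              (r (cfg j) (cfg (j - 1)) b a *
                g (Function.update (Function.update cfg (j - 1) a) j b)))
          - (∏ k : ZMod N, gibbsMeasure π ξ η θ τ (cfg k)) * f cfg * g cfg *
              (∑ j : ZMod N, ∑ a : S, ∑ b : S, r (cfg j) (cfg (j - 1)) b a) := by
      intro cfg
      simp only [reversedGenerator, mul_sub, Finset.mul_sum, Finset.sum_sub_distrib]
      congr 1
      refine Finset.sum_congr rfl fun j _ => Finset.sum_congr rfl fun a _ =>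
        Finset.sum_congr rfl fun b _ => by ring
    rw [Finset.sum_congr rfl (fun cfg _ => pointL cfg),
        Finset.sum_congr rfl (fun cfg _ => pointR cfg),
        Finset.sum_sub_distrib, Finset.sum_sub_distrib]
    congr 1
    · -- plus parts
      rw [Finset.sum_comm]
      have step : ∀ j : ZMod N,
          (∑ cfg : ZMod N → S, ∑ c : S, ∑ d : S,
              (∏ k : ZMod N, gibbsMeasure π ξ η θ τ (cfg k)) * g cfg *
                (r (cfg j) (cfg (j + 1)) c d *
                  f (Function.update (Function.update cfg j c) (j + 1) d)))
          = ∑ cfg : ZMod N → S, ∑ a : S, ∑ b : S,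
              (∏ k : ZMod N, gibbsMeasure π ξ η θ τ (cfg k)) * f cfg *
                (r (cfg (j + 1)) (cfg j) b a *
                  g (Function.update (Function.update cfg j a) (j + 1) b)) :=
        fun j => key_step (gibbsMeasure π ξ η θ τ) r hdb j (hj j) f g
      rw [Finset.sum_congr rfl (fun j _ => step j)]
      have reidx :
          (∑ j : ZMod N, ∑ cfg : ZMod N → S, ∑ a : S, ∑ b : S,
              (∏ k : ZMod N, gibbsMeasure π ξ η θ τ (cfg k)) * f cfg *
                (r (cfg (j + 1)) (cfg j) b a *
                  g (Function.update (Function.update cfg j a) (j + 1) b)))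
          = ∑ j : ZMod N, ∑ cfg : ZMod N → S, ∑ a : S, ∑ b : S,
              (∏ k : ZMod N, gibbsMeasure π ξ η θ τ (cfg k)) * f cfg *
                (r (cfg j) (cfg (j - 1)) b a *
                  g (Function.update (Function.update cfg (j - 1) a) j b)) := by
        refine Fintype.sum_bijective (· + (1 : ZMod N))
          (Equiv.addRight (1 : ZMod N)).bijective _ _ (fun j => ?_)
        simp only [add_sub_cancel_right]
      rw [reidx, Finset.sum_comm]
    · -- minus parts
      refine Finset.sum_congr rfl fun cfg _ => ?_
      have hswap : (∑ j : ZMod N, ∑ a : S, ∑ b : S, r (cfg j) (cfg (j - 1)) b a)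
          = ∑ j : ZMod N, ∑ c : S, ∑ d : S, r (cfg j) (cfg (j - 1)) c d :=
        Finset.sum_congr rfl fun j _ => Finset.sum_comm
      have hsh : (∑ j : ZMod N, ∑ c : S, ∑ d : S, r (cfg (j + 1)) (cfg j) c d)
          = ∑ j : ZMod N, ∑ c : S, ∑ d : S, r (cfg j) (cfg (j - 1)) c d := by
        refine Fintype.sum_bijective (· + (1 : ZMod N))
          (Equiv.addRight (1 : ZMod N)).bijective _ _ (fun j => ?_)
        simp only [add_sub_cancel_right]
      have hcyc := cycle_sum (fun a b => ∑ c : S, ∑ d : S, r a b c d) hD c₀ cfg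
      rw [hswap, ← hsh, ← hcyc]
      ring
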